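/- For independent ε₁,…,ε_c ~ N(0,σ²) and any unmatched-edge lower bound μ > 0 on standardized mean differences, the probability that a specific incorrect matching (containing at least one unmatched edge pair whose weight difference is N(μ'σ, 2σ²) with |μ'| ≥ μ) is excluded from the feasible set at threshold τ_c = Φ⁻¹(1−α/2)σ/√c is at least Φ((−Φ⁻¹(1−α/2) − μ√c)/√(2c)) + 1 − Φ((Φ⁻¹(1−α/2) − μ√c)/√(2c)). -/

import Mathlib

/-!
Write `Z = √2 σ N + μσ` with `N` standard normal. For a threshold `τ ≥ 0` the event `τ < |Z|` is
the disjoint union of `Z < -τ` and `τ < Z`, so its probability is exactly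
`Φ((-τ - μσ) / (√2 σ)) + 1 - Φ((τ - μσ) / (√2 σ))`; for `τ = qσ/√c` these arguments simplify to the
ones in the bound, which therefore holds with equality. The threshold is nonnegative because
`Φ q = 1 - α/2 > 1/2 = Φ 0`.
-/

open scoped NNReal
open MeasureTheory ProbabilityTheory

/-- Standard normal cumulative distribution function. -/
noncomputable def stdNormalCDF (t : ℝ) : ℝ := ((gaussianReal 0 1) (Set.Iic t)).toReal

open Set

lemma stdNormalCDF_mono : Monotone stdNormalCDF := fun _ _ hst =>
  measureReal_mono (μ := gaussianReal 0 1) (Iic_subset_Iic.2 hst)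

lemma gaussianReal_zero_one_real_Iio (t : ℝ) :
    (gaussianReal 0 1).real (Iio t) = stdNormalCDF t := by
  have := nullSingletonClass_gaussianReal (μ := 0) one_ne_zero
  exact measureReal_congr Iio_ae_eq_Iic

lemma gaussianReal_zero_one_real_Ioi (t : ℝ) :
    (gaussianReal 0 1).real (Ioi t) = 1 - stdNormalCDF t := by
  rw [← compl_Iic, measureReal_compl measurableSet_Iic, probReal_univ]
  rfl

lemma stdNormalCDF_neg (t : ℝ) : stdNormalCDF (-t) = 1 - stdNormalCDF t := by
  have := nullSingletonClass_gaussianReal (μ := 0) one_ne_zero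
  have hsymm : (gaussianReal 0 1).map (fun x ↦ -x) = gaussianReal 0 1 := by
    simpa using gaussianReal_map_neg (μ := 0) (v := 1)
  calc stdNormalCDF (-t) = ((gaussianReal 0 1).map (fun x ↦ -x)).real (Iic (-t)) := by
        rw [hsymm]; rfl
    _ = (gaussianReal 0 1).real (Ici t) := by
        rw [map_measureReal_apply measurable_neg measurableSet_Iic, neg_preimage, neg_Iic, neg_neg]
    _ = 1 - stdNormalCDF t := by
        rw [measureReal_congr Ioi_ae_eq_Ici.symm, gaussianReal_zero_one_real_Ioi]

lemma stdNormalCDF_zero : stdNormalCDF 0 = 1 / 2 := by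
  linarith [neg_zero (G := ℝ) ▸ stdNormalCDF_neg 0]

lemma nonneg_of_half_lt_stdNormalCDF {q : ℝ} (hq : 1 / 2 < stdNormalCDF q) : 0 ≤ q := by
  by_contra! hneg
  linarith [stdNormalCDF_zero ▸ stdNormalCDF_mono hneg.le]

lemma gaussianReal_eq_map_zero_one (m : ℝ) (v : ℝ≥0) :
    gaussianReal m v = (gaussianReal 0 1).map (fun x ↦ √v * x + m) := by
  have hcomp : (fun x : ℝ ↦ √v * x + m) = (· + m) ∘ (√v * ·) := rfl
  rw [hcomp, ← Measure.map_map (measurable_add_const m) (measurable_const_mul _),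
    gaussianReal_map_const_mul, gaussianReal_map_add_const]
  congr
  · simp
  · ext; simp

lemma gaussianReal_real_Iio (m : ℝ) {v : ℝ≥0} (hv : v ≠ 0) (t : ℝ) :
    (gaussianReal m v).real (Iio t) = stdNormalCDF ((t - m) / √v) := by
  have hpos : 0 < √(v : ℝ) := Real.sqrt_pos.2 (NNReal.coe_pos.2 (pos_iff_ne_zero.2 hv))
  rw [gaussianReal_eq_map_zero_one, map_measureReal_apply (by fun_prop) measurableSet_Iio,
    ← gaussianReal_zero_one_real_Iio]
  congr 1
  ext x
  simp only [mem_preimage, mem_Iio, lt_div_iff₀ hpos]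
  constructor <;> intro <;> linarith

lemma gaussianReal_real_Ioi (m : ℝ) {v : ℝ≥0} (hv : v ≠ 0) (t : ℝ) :
    (gaussianReal m v).real (Ioi t) = 1 - stdNormalCDF ((t - m) / √v) := by
  have hpos : 0 < √(v : ℝ) := Real.sqrt_pos.2 (NNReal.coe_pos.2 (pos_iff_ne_zero.2 hv))
  rw [gaussianReal_eq_map_zero_one, map_measureReal_apply (by fun_prop) measurableSet_Ioi,
    ← gaussianReal_zero_one_real_Ioi]
  congr 1
  ext x
  simp only [mem_preimage, mem_Ioi, div_lt_iff₀ hpos]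
  constructor <;> intro <;> linarith

lemma gaussianReal_real_abs_gt (m : ℝ) {v : ℝ≥0} (hv : v ≠ 0) {τ : ℝ} (hτ : 0 ≤ τ) :
    (gaussianReal m v).real {x | τ < |x|}
      = stdNormalCDF ((-τ - m) / √v) + 1 - stdNormalCDF ((τ - m) / √v) := by
  have hsplit : {x : ℝ | τ < |x|} = Iio (-τ) ∪ Ioi τ := by
    ext x
    simp only [mem_ofPred_eq, mem_union, mem_Iio, mem_Ioi, lt_abs, lt_neg]
    tauto
  have hdisj : Disjoint (Iio (-τ)) (Ioi τ) :=
    (Iic_disjoint_Ioi (by linarith)).mono_left Iio_subset_Iic_self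
  rw [hsplit, measureReal_union hdisj measurableSet_Ioi, gaussianReal_real_Iio m hv,
    gaussianReal_real_Ioi m hv]
  ring

lemma standardize_threshold (x μ : ℝ) {σ c : ℝ} (hσ : 0 < σ) (hc : 0 < c) :
    (x * σ / √c - μ * σ) / √(2 * σ ^ 2) = (x - μ * √c) / √(2 * c) := by
  have hc' : 0 < √c := Real.sqrt_pos.2 hc
  rw [Real.sqrt_mul zero_le_two, Real.sqrt_mul zero_le_two, Real.sqrt_sq hσ.le]
  field_simp

theorem exclusion_prob_lower_bound_general
    {Ω : Type*} [MeasureSpace Ω] (P : Measure Ω) [IsProbabilityMeasure P]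
    (σ : ℝ≥0) (hσ : 0 < σ) (μ : ℝ)
    (α : ℝ) (hα : α ∈ Set.Ioo (0 : ℝ) 1)
    (q : ℝ) (hq : stdNormalCDF q = 1 - α / 2)
    (c : ℕ) (hc : 0 < c)
    (Z : Ω → ℝ) (hZ : Measure.map Z P = gaussianReal (μ * σ) (2 * σ ^ 2)) :
    stdNormalCDF ((-q - μ * Real.sqrt c) / Real.sqrt (2 * c))
        + 1 - stdNormalCDF ((q - μ * Real.sqrt c) / Real.sqrt (2 * c))
      ≤ (P {ω | q * σ / Real.sqrt c < |Z ω|}).toReal := by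
  have hσ' : (0 : ℝ) < σ := hσ
  have hc' : (0 : ℝ) < c := Nat.cast_pos.2 hc
  have hτ : 0 ≤ q * σ / √c := by
    have : 0 ≤ q := nonneg_of_half_lt_stdNormalCDF (by rw [hq]; linarith [hα.2])
    positivity
  have hZm : AEMeasurable Z P := .of_map_ne_zero (hZ ▸ IsProbabilityMeasure.ne_zero _)
  have hlaw : P.real {ω | q * σ / √c < |Z ω|}
      = (gaussianReal (μ * σ) (2 * σ ^ 2)).real {x | q * σ / √c < |x|} := by
    rw [← hZ, map_measureReal_apply_of_aemeasurable hZm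
      (measurableSet_lt measurable_const continuous_abs.measurable)]
    rfl
  rw [← measureReal_def, hlaw, gaussianReal_real_abs_gt _ (by positivity) hτ]
  push_cast
  rw [← neg_div, ← neg_mul, standardize_threshold _ _ hσ' hc', standardize_threshold _ _ hσ' hc']

/-- For Z ~ N(μσ, 2σ²), the probability that |Z| exceeds the threshold
τ_c = Φ⁻¹(1−α/2)σ/√c (i.e. that the incorrect matching is excluded from the feasible
set) is at least Φ((−Φ⁻¹(1−α/2) − μ√c)/√(2c)) + 1 − Φ((Φ⁻¹(1−α/2) − μ√c)/√(2c)). -/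
theorem exclusion_prob_lower_bound
    {Ω : Type*} [MeasureSpace Ω] (P : Measure Ω) [IsProbabilityMeasure P]
    (σ : ℝ≥0) (hσ : 0 < σ) (μ : ℝ) (hμ : 0 < μ)
    (α : ℝ) (hα : α ∈ Set.Ioo (0 : ℝ) 1)
    (q : ℝ) (hq : stdNormalCDF q = 1 - α / 2)
    (c : ℕ) (hc : 0 < c)
    (Z : Ω → ℝ) (hZ : Measure.map Z P = gaussianReal (μ * σ) (2 * σ ^ 2)) :
    stdNormalCDF ((-q - μ * Real.sqrt c) / Real.sqrt (2 * c))
        + 1 - stdNormalCDF ((q - μ * Real.sqrt c) / Real.sqrt (2 * c))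
      ≤ (P {ω | q * σ / Real.sqrt c < |Z ω|}).toReal :=
  exclusion_prob_lower_bound_general P σ hσ μ α hα q hq c hc Z hZ
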